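/- Let H be a Hopf *-algebra, B a right H-module *-algebra, M a right H-equivariant B-*-bimodule, and ∂ : B → M an H-equivariant *-derivation. The map MC[∂] : ZS¹_ℓ(H;B,M) → ZH¹_ℓ(H;M), defined by MC[∂](σ)(h) := −∂σ(h₍₁₎)·σ*(h₍₂₎), is a group 1-cocycle for the conjugation action: MC[∂](σ⋆τ) = MC[∂](σ) + σ ⊳ MC[∂](τ), where σ ⊳ μ := σ⋆μ⋆σ⁻¹. -/

import Mathlib

open TensorProduct

section ConvolutionFramework

variable {k : Type*} [CommRing k] [StarRing k]
variable {H : Type*} [Ring H] [HopfAlgebra k H] [StarRing H] [StarModule k H]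
variable {B : Type*} [Ring B] [Algebra k B] [StarRing B] [StarModule k B]
variable {M : Type*} [AddCommGroup M] [Module k M] [StarAddMonoid M] [StarModule k M]

/-- The convolution product on `C(H,B) = Hom_k(H,B)`:
`(f ⋆ g)(h) = f(h₍₁₎) g(h₍₂₎)`. -/
noncomputable def conv (f g : H →ₗ[k] B) : H →ₗ[k] B :=
  LinearMap.mul' k B ∘ₗ TensorProduct.map f g ∘ₗ Coalgebra.comul

/-- The convolution unit `ε(·) 1_B`. -/
noncomputable def convOne : H →ₗ[k] B :=
  Algebra.linearMap k B ∘ₗ Coalgebra.counit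

/-- The involution on the convolution bimodule: `f*(h) = (f (S(h)*))*`. -/
noncomputable def convStar (f : H →ₗ[k] M) : H →ₗ[k] M where
  toFun h := star (f (star (HopfAlgebra.antipode (R := k) h)))
  map_add' x y := by simp
  map_smul' r x := by simp [star_smul]

/-- The `star ⊗ star` map on `H ⊗ H` (as an additive map). -/
noncomputable def starTensor : H ⊗[k] H →+ H ⊗[k] H :=
  TensorProduct.liftAddHom
    { toFun := fun x =>
        { toFun := fun y => star x ⊗ₜ[k] star y
          map_zero' := by simp
          map_add' := fun y₁ y₂ => by simp [star_add, TensorProduct.tmul_add] }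
      map_zero' := by ext y; simp
      map_add' := fun x₁ x₂ => by ext y; simp [star_add, TensorProduct.add_tmul] }
    (fun r x y => by
      simp only [AddMonoidHom.coe_mk, ZeroHom.coe_mk, star_smul]
      rw [TensorProduct.smul_tmul])

/-- `H` is a Hopf `*`-algebra: `Δ(h*) = h₍₁₎* ⊗ h₍₂₎*`, `ε(h*) = ε(h)*`, and
`S ∘ * ∘ S ∘ * = id`. -/
def IsHopfStar (k H : Type*) [CommRing k] [StarRing k]
    [Ring H] [HopfAlgebra k H] [StarRing H] [StarModule k H] : Prop :=
  (∀ h : H, Coalgebra.comul (R := k) (star h) = starTensor (Coalgebra.comul (R := k) h)) ∧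
  (∀ h : H, Coalgebra.counit (R := k) (star h) = star (Coalgebra.counit (R := k) h)) ∧
  (∀ h : H, HopfAlgebra.antipode (R := k) (star (HopfAlgebra.antipode (R := k) (star h))) = h)

end ConvolutionFramework

section ModuleAlgebra

/-- A right `H`-module `*`-algebra `B`: a right action `act` of `H` on `B` such that the
multiplication and unit of `B` are `H`-linear in the Hopf sense and the action is
compatible with the `*`-structures. -/
structure RightHopfModuleStarAlgebra (k H B : Type*) [CommRing k] [StarRing k]
    [Ring H] [HopfAlgebra k H] [StarRing H] [StarModule k H]
    [Ring B] [Algebra k B] [StarRing B] [StarModule k B] where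
  act : B →ₗ[k] H →ₗ[k] B
  act_one : ∀ b : B, act b 1 = b
  act_mul : ∀ (b : B) (h h' : H), act b (h * h') = act (act b h) h'
  act_algebra_mul : ∀ b₁ b₂ : B,
    act (b₁ * b₂) = LinearMap.mul' k B ∘ₗ TensorProduct.map (act b₁) (act b₂) ∘ₗ Coalgebra.comul
  act_algebra_one : act 1 = Algebra.linearMap k B ∘ₗ Coalgebra.counit
  act_star : ∀ (b : B) (h : H),
    star (act b h) = act (star b) (star (HopfAlgebra.antipode (R := k) h))

/-- A right `H`-equivariant `B`-`*`-bimodule `M`: commuting left and right `B`-actions,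
a right `H`-action, the `*`-structure compatibilities, and Hopf-equivariance of the
`B`-actions. -/
structure EquivStarBimodule (k H B M : Type*) [CommRing k] [StarRing k]
    [Ring H] [HopfAlgebra k H] [StarRing H] [StarModule k H]
    [Ring B] [Algebra k B] [StarRing B] [StarModule k B]
    [AddCommGroup M] [Module k M] [StarAddMonoid M] [StarModule k M]
    (ρ : RightHopfModuleStarAlgebra k H B) where
  lact : B →ₗ[k] M →ₗ[k] M
  ract : M →ₗ[k] B →ₗ[k] M
  hact : M →ₗ[k] H →ₗ[k] M
  lact_one : ∀ m : M, lact 1 m = m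
  lact_mul : ∀ (b₁ b₂ : B) (m : M), lact (b₁ * b₂) m = lact b₁ (lact b₂ m)
  ract_one : ∀ m : M, ract m 1 = m
  ract_mul : ∀ (m : M) (b₁ b₂ : B), ract m (b₁ * b₂) = ract (ract m b₁) b₂
  middle : ∀ (b₁ : B) (m : M) (b₂ : B), ract (lact b₁ m) b₂ = lact b₁ (ract m b₂)
  star_compat : ∀ (b₁ : B) (m : M) (b₂ : B),
    star (lact b₁ (ract m b₂)) = lact (star b₂) (ract (star m) (star b₁))
  hact_one : ∀ m : M, hact m 1 = m
  hact_mul : ∀ (m : M) (h h' : H), hact m (h * h') = hact (hact m h) h'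
  hact_lact : ∀ (b : B) (m : M), hact (lact b m) =
    TensorProduct.lift lact ∘ₗ TensorProduct.map (ρ.act b) (hact m) ∘ₗ Coalgebra.comul
  hact_ract : ∀ (m : M) (b : B), hact (ract m b) =
    TensorProduct.lift ract ∘ₗ TensorProduct.map (hact m) (ρ.act b) ∘ₗ Coalgebra.comul
  hact_star : ∀ (m : M) (h : H),
    star (hact m h) = hact (star m) (star (HopfAlgebra.antipode (R := k) h))

variable {k H B M : Type*} [CommRing k] [StarRing k]
  [Ring H] [HopfAlgebra k H] [StarRing H] [StarModule k H]
  [Ring B] [Algebra k B] [StarRing B] [StarModule k B]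
  [AddCommGroup M] [Module k M] [StarAddMonoid M] [StarModule k M]
  {ρ : RightHopfModuleStarAlgebra k H B}

/-- The left convolution action of `C(H,B)` on `C(H,M)`: `(f ⋆ μ)(h) = f(h₍₁₎) • μ(h₍₂₎)`. -/
noncomputable def convL (S : EquivStarBimodule k H B M ρ)
    (f : H →ₗ[k] B) (μ : H →ₗ[k] M) : H →ₗ[k] M :=
  TensorProduct.lift S.lact ∘ₗ TensorProduct.map f μ ∘ₗ Coalgebra.comul

/-- The right convolution action of `C(H,B)` on `C(H,M)`: `(μ ⋆ f)(h) = μ(h₍₁₎) • f(h₍₂₎)`. -/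
noncomputable def convR (S : EquivStarBimodule k H B M ρ)
    (μ : H →ₗ[k] M) (f : H →ₗ[k] B) : H →ₗ[k] M :=
  TensorProduct.lift S.ract ∘ₗ TensorProduct.map μ f ∘ₗ Coalgebra.comul

/-- A lazy Sweedler 1-cocycle: a unitary `σ` of `C(H,B)` centralizing
`ρ_B(B) ⊕ ρ_M(M)`, with `σ(1) = 1` and `σ(hk) = (σ(h) ◁ k₍₁₎) σ(k₍₂₎)`. -/
noncomputable def IsLazySweedlerCocycle (S : EquivStarBimodule k H B M ρ)
    (σ : H →ₗ[k] B) : Prop :=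
  conv σ (convStar σ) = convOne ∧
  conv (convStar σ) σ = convOne ∧
  (∀ b : B, conv σ (ρ.act b) = conv (ρ.act b) σ) ∧
  (∀ m : M, convL S σ (S.hact m) = convR S (S.hact m) σ) ∧
  σ 1 = 1 ∧
  (∀ h : H, σ ∘ₗ LinearMap.mulLeft k h =
    LinearMap.mul' k B ∘ₗ TensorProduct.map (ρ.act (σ h)) σ ∘ₗ Coalgebra.comul)

/-- A lazy Hochschild 1-cocycle: a self-adjoint `μ ∈ C(H,M)` centralizing `ρ_B(B)`,
with `μ(1) = 0` and `μ(hk) = μ(h) ◁ k + ε(h) μ(k)`. -/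
noncomputable def IsLazyHochschildCocycle (S : EquivStarBimodule k H B M ρ)
    (μ : H →ₗ[k] M) : Prop :=
  convStar μ = μ ∧
  (∀ b : B, convL S (ρ.act b) μ = convR S μ (ρ.act b)) ∧
  μ 1 = 0 ∧
  (∀ h : H, μ ∘ₗ LinearMap.mulLeft k h = S.hact (μ h) + Coalgebra.counit (R := k) h • μ)

/-- `υ` is a unitary of `Cent_B(B ⊕ M)`: a unitary of `B` commuting with all of `B` and
centralizing `M`. -/
def IsCentralUnitary (S : EquivStarBimodule k H B M ρ) (υ : B) : Prop :=
  υ * star υ = 1 ∧ star υ * υ = 1 ∧ (∀ b : B, υ * b = b * υ) ∧ ∀ m : M, S.lact υ m = S.ract m υ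

/-- The Sweedler coboundary `Dυ(h) := (υ ◁ h) υ*`. -/
noncomputable def sweedlerCobound (ρ : RightHopfModuleStarAlgebra k H B) (υ : B) :
    H →ₗ[k] B :=
  LinearMap.mulRight k (star υ) ∘ₗ ρ.act υ

/-- The Hochschild coboundary `Dm(h) := m ◁ h - ε(h) m`. -/
noncomputable def hochCobound (S : EquivStarBimodule k H B M ρ) (m : M) : H →ₗ[k] M :=
  S.hact m - LinearMap.smulRight (Coalgebra.counit (R := k)) m

/-- An `H`-equivariant `*`-derivation `der : B → M`. -/
def IsEquivStarDerivation (S : EquivStarBimodule k H B M ρ) (der : B →ₗ[k] M) : Prop :=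
  (∀ b₁ b₂ : B, der (b₁ * b₂) = S.ract (der b₁) b₂ + S.lact b₁ (der b₂)) ∧
  (∀ b : B, der (star b) = - star (der b)) ∧
  (∀ (b : B) (h : H), der (ρ.act b h) = S.hact (der b) h)

/-- The Maurer–Cartan cocycle `MC[der](σ)(h) := -derσ(h₍₁₎) • σ*(h₍₂₎)`. -/
noncomputable def mcCocycle (S : EquivStarBimodule k H B M ρ) (der : B →ₗ[k] M)
    (σ : H →ₗ[k] B) : H →ₗ[k] M :=
  - (TensorProduct.lift S.ract ∘ₗ TensorProduct.map (der ∘ₗ σ) (convStar σ) ∘ₗ Coalgebra.comul)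

end ModuleAlgebra


/-!
Write `ν(σ) = ∂σ ⋆ σ*`, so that `MC[∂](σ) = -ν(σ)`. The Leibniz rule applied to `σ ⋆ σ* = ε`
gives `ν(σ) = -σ ⋆ ∂(σ*)`. Since `(f ⋆ g)* = g* ⋆ f*` (this is where `Δ ∘ S = (S ⊗ S) ∘ flip ∘ Δ`
enters) and `(∂σ)* = -∂(σ*)`, this says that `MC[∂](σ)` is self-adjoint. Laziness of `σ`, hence
of `σ* = σ⁻¹`, together with the Leibniz rule applied to `σ ⋆ ρ_B(b) = ρ_B(b) ⋆ σ`, shows that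
`ν(σ)` commutes with `ρ_B(B)`. The twisted multiplicativity `σ(hk) = (σ(h) ◁ k₍₁₎) σ(k₍₂₎)` and
its mirror image `σ*(hk) = σ*(h₍₁₎) (σ*(h₍₂₎) ◁ k)` then turn `ν(σ)(hk)` into
`ν(σ)(h) ◁ k + ε(h) ν(σ)(k)`. Finally the Leibniz rule for `∂(σ ⋆ τ)`, with
`(σ ⋆ τ)* = τ* ⋆ σ*` and `τ ⋆ τ* = ε`, gives the group cocycle identity, `σ⁻¹ = σ*` being forced
by uniqueness of convolution inverses.
-/

open Coalgebra

section ConvWith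

variable {k C P Q R U V W : Type*} [CommRing k] [AddCommGroup C] [Module k C] [Coalgebra k C]
  [AddCommGroup P] [Module k P] [AddCommGroup Q] [Module k Q] [AddCommGroup R] [Module k R]
  [AddCommGroup U] [Module k U] [AddCommGroup V] [Module k V] [AddCommGroup W] [Module k W]

/-- `conv`, `convL` and `convR` are the cases where `β` is the multiplication of `B` and the two
actions of `B` on `M`. -/
noncomputable def convWith (β : P →ₗ[k] Q →ₗ[k] V) :
    (C →ₗ[k] P) →ₗ[k] (C →ₗ[k] Q) →ₗ[k] C →ₗ[k] V :=
  LinearMap.mk₂ k (fun f g => lift β ∘ₗ map f g ∘ₗ comul)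
    (fun f₁ f₂ g => by rw [map_add_left, LinearMap.add_comp, LinearMap.comp_add])
    (fun r f g => by rw [map_smul_left, LinearMap.smul_comp, LinearMap.comp_smul])
    (fun f g₁ g₂ => by rw [map_add_right, LinearMap.add_comp, LinearMap.comp_add])
    (fun r f g => by rw [map_smul_right, LinearMap.smul_comp, LinearMap.comp_smul])

theorem convWith_apply (β : P →ₗ[k] Q →ₗ[k] V) (f : C →ₗ[k] P) (g : C →ₗ[k] Q) {c : C}
    {ι : Type*} (r : Repr k c ι) :
    convWith β f g c = ∑ i ∈ r.index, β (f (r.left i)) (g (r.right i)) := by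
  simp [convWith, ← r.eq]

theorem convWith_comp_counit_left (β : P →ₗ[k] Q →ₗ[k] V) (φ : k →ₗ[k] P) (g : C →ₗ[k] Q) :
    convWith β (φ ∘ₗ counit) g = β (φ 1) ∘ₗ g := by
  ext c
  rw [convWith_apply β _ g (ℛ k c)]
  conv_rhs => rw [LinearMap.comp_apply, ← sum_counit_smul (ℛ k c)]
  have hφ (a : k) : φ a = a • φ 1 := by rw [← map_smul, smul_eq_mul, mul_one]
  rw [map_sum, map_sum]
  refine Finset.sum_congr rfl fun i _ => ?_
  rw [LinearMap.comp_apply, hφ, LinearMap.map_smul₂, map_smul, map_smul]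

theorem convWith_assoc (α : P →ₗ[k] Q →ₗ[k] U) (β : U →ₗ[k] R →ₗ[k] V)
    (γ : Q →ₗ[k] R →ₗ[k] W) (δ : P →ₗ[k] W →ₗ[k] V)
    (compat : ∀ p q r, β (α p q) r = δ p (γ q r)) (f : C →ₗ[k] P) (g : C →ₗ[k] Q)
    (h : C →ₗ[k] R) :
    convWith β (convWith α f g) h = convWith δ f (convWith γ g h) := by
  ext c
  let r := ℛ k c
  have coassoc := congrArg (lift δ ∘ₗ map f (lift γ ∘ₗ map g h))
    (sum_tmul_tmul_eq r (fun i => ℛ k (r.left i)) (fun i => ℛ k (r.right i)))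
  simp only [convWith_apply _ _ _ r, convWith_apply _ _ _ (ℛ k _), map_sum,
    LinearMap.sum_apply, compat]
  simpa using coassoc

theorem convWith_comp_mulLeft {H : Type*} [Ring H] [Bialgebra k H] (β : P →ₗ[k] Q →ₗ[k] V)
    (f : H →ₗ[k] P) (g : H →ₗ[k] Q) {h : H} {ι : Type*} (r : Repr k h ι) :
    convWith β f g ∘ₗ LinearMap.mulLeft k h = ∑ i ∈ r.index,
      convWith β (f ∘ₗ LinearMap.mulLeft k (r.left i)) (g ∘ₗ LinearMap.mulLeft k (r.right i)) := by
  ext x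
  rw [LinearMap.comp_apply, LinearMap.mulLeft_apply, convWith_apply _ _ _ (r.mul (ℛ k x)),
    LinearMap.sum_apply]
  simp [Finset.sum_product, convWith_apply _ _ _ (ℛ k x)]

end ConvWith

section Hopf

open HopfAlgebra WithConv

variable {k H : Type*} [CommRing k] [Ring H] [HopfAlgebra k H]

theorem toConv_algHom_comp_antipode_mul {A : Type*} [Ring A] [Algebra k A] (j : H →ₐ[k] A) :
    toConv (j.toLinearMap ∘ₗ antipode k) * toConv j.toLinearMap = 1 := by
  have := LinearMap.algHom_comp_convMul_distrib j (toConv (antipode k)) (toConv .id)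
  rw [LinearMap.antipode_mul_id, ofConv_toConv, ofConv_toConv, LinearMap.comp_id] at this
  apply WithConv.ext
  rw [← this]
  ext h
  simp

theorem HopfAlgebra.comul_antipode (h : H) :
    comul (antipode k h) = map (antipode k) (antipode k) (TensorProduct.comm k H H (comul h)) := by
  -- Both sides are convolution inverses of `Δ = j₁ ⋆ j₂`, where `j₁, j₂ : H → H ⊗ H` are the
  -- two inclusions: the right-hand side is `(j₂ ∘ S) ⋆ (j₁ ∘ S)`.
  let j₁ : H →ₐ[k] H ⊗[k] H := Algebra.TensorProduct.includeLeft
  let j₂ : H →ₐ[k] H ⊗[k] H := Algebra.TensorProduct.includeRight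
  let S := antipode k (A := H)
  have comul_eq : toConv (comul : H →ₗ[k] H ⊗[k] H) =
      toConv j₁.toLinearMap * toConv j₂.toLinearMap := by
    ext x
    rw [ofConv_toConv, LinearMap.convMul_apply, ← (ℛ k x).eq]
    simp [map_sum, Algebra.TensorProduct.tmul_mul_tmul, j₁, j₂]
  have flip_eq : toConv (map S S ∘ₗ (TensorProduct.comm k H H).toLinearMap ∘ₗ comul) =
      toConv (j₂.toLinearMap ∘ₗ S) * toConv (j₁.toLinearMap ∘ₗ S) := by
    ext x
    rw [ofConv_toConv, LinearMap.convMul_apply, LinearMap.comp_apply, LinearMap.comp_apply,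
      ← (ℛ k x).eq]
    simp [map_sum, Algebra.TensorProduct.tmul_mul_tmul, j₁, j₂]
  have left_inv : toConv (map S S ∘ₗ (TensorProduct.comm k H H).toLinearMap ∘ₗ comul) *
      toConv (comul : H →ₗ[k] H ⊗[k] H) = 1 := by
    rw [flip_eq, comul_eq, mul_assoc, ← mul_assoc (toConv (j₁.toLinearMap ∘ₗ S)),
      toConv_algHom_comp_antipode_mul, one_mul, toConv_algHom_comp_antipode_mul]
  exact congr($(left_inv_eq_right_inv left_inv LinearMap.comul_right_inv) h).symm

theorem HopfAlgebra.star_antipode_mul [StarRing H] (x y : H) :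
    star (antipode k (x * y)) = star (antipode k x) * star (antipode k y) := by
  rw [antipode_mul_antidistrib, star_mul]

end Hopf

section StarHopf

open HopfAlgebra

variable {k H : Type*} [CommRing k] [StarRing k] [Ring H] [HopfAlgebra k H] [StarRing H]
  [StarModule k H]

theorem IsHopfStar.star_antipode_star_antipode (hH : IsHopfStar k H) (h : H) :
    star (antipode k (star (antipode k h))) = h := by
  simpa using congrArg star (hH.2.2 (star h))

noncomputable def IsHopfStar.reprStarAntipode (hH : IsHopfStar k H) {h : H} {ι : Type*}
    (r : Repr k h ι) : Repr k (star (antipode k h)) ι where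
  index := r.index
  left i := star (antipode k (r.right i))
  right i := star (antipode k (r.left i))
  eq := by
    rw [hH.1, comul_antipode, ← r.eq]
    simp [starTensor]

variable {P Q V : Type*} [AddCommGroup P] [Module k P] [StarAddMonoid P] [StarModule k P]
  [AddCommGroup Q] [Module k Q] [StarAddMonoid Q] [StarModule k Q]
  [AddCommGroup V] [Module k V] [StarAddMonoid V] [StarModule k V]

theorem convStar_apply (f : H →ₗ[k] P) (h : H) :
    convStar f h = star (f (star (antipode k h))) := rfl

theorem convStar_neg (f : H →ₗ[k] P) : convStar (-f) = -convStar f := by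
  ext h
  simp [convStar_apply]

theorem IsHopfStar.convStar_convStar (hH : IsHopfStar k H) (f : H →ₗ[k] P) :
    convStar (convStar f) = f := by
  ext h
  simp [convStar_apply, hH.star_antipode_star_antipode]

theorem convStar_comp_mulLeft (f : H →ₗ[k] P) (h : H) :
    convStar f ∘ₗ LinearMap.mulLeft k h =
      convStar (f ∘ₗ LinearMap.mulLeft k (star (antipode k h))) := by
  ext x
  simp [convStar_apply, star_antipode_mul]

theorem IsHopfStar.convStar_convWith (hH : IsHopfStar k H) (β : P →ₗ[k] Q →ₗ[k] V)
    (β' : Q →ₗ[k] P →ₗ[k] V) (hβ : ∀ p q, star (β p q) = β' (star q) (star p))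
    (f : H →ₗ[k] P) (g : H →ₗ[k] Q) :
    convStar (convWith β f g) = convWith β' (convStar g) (convStar f) := by
  ext h
  rw [convStar_apply, convWith_apply _ _ _ (hH.reprStarAntipode (ℛ k h)),
    convWith_apply _ _ _ (ℛ k h), star_sum]
  exact Finset.sum_congr rfl fun i _ => hβ _ _

end StarHopf

section Conv

variable {k H B : Type*} [CommRing k] [Ring H] [HopfAlgebra k H] [Ring B] [Algebra k B]

theorem conv_eq_convWith (f g : H →ₗ[k] B) : conv f g = convWith (LinearMap.mul k B) f g := rfl

theorem conv_apply (f g : H →ₗ[k] B) {h : H} {ι : Type*} (r : Repr k h ι) :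
    conv f g h = ∑ i ∈ r.index, f (r.left i) * g (r.right i) :=
  convWith_apply _ f g r

theorem conv_assoc (f g h : H →ₗ[k] B) : conv (conv f g) h = conv f (conv g h) :=
  congrArg WithConv.ofConv (mul_assoc (WithConv.toConv f) (WithConv.toConv g) (WithConv.toConv h))

theorem convOne_conv (f : H →ₗ[k] B) : conv convOne f = f :=
  congrArg WithConv.ofConv (one_mul (WithConv.toConv f))

theorem conv_inverse_unique {σ σ' σ'' : H →ₗ[k] B} (h₁ : conv σ' σ = convOne)
    (h₂ : conv σ σ'' = convOne) : σ' = σ'' :=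
  congrArg WithConv.ofConv
    (left_inv_eq_right_inv (congrArg WithConv.toConv h₁) (congrArg WithConv.toConv h₂))

theorem conv_comm_of_inverse {σ σ' f : H →ₗ[k] B} (h₁ : conv σ σ' = convOne)
    (h₂ : conv σ' σ = convOne) (hf : conv σ f = conv f σ) : conv σ' f = conv f σ' := by
  let u : (WithConv (H →ₗ[k] B))ˣ :=
    ⟨.toConv σ, .toConv σ', congrArg WithConv.toConv h₁, congrArg WithConv.toConv h₂⟩
  exact congrArg WithConv.ofConv (Commute.units_inv_left (u := u) (congrArg WithConv.toConv hf))

end Conv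

section Bimodule

variable {k H B M : Type*} [CommRing k] [StarRing k]
  [Ring H] [HopfAlgebra k H] [StarRing H] [StarModule k H]
  [Ring B] [Algebra k B] [StarRing B] [StarModule k B]
  [AddCommGroup M] [Module k M] [StarAddMonoid M] [StarModule k M]
  {ρ : RightHopfModuleStarAlgebra k H B} {S : EquivStarBimodule k H B M ρ}

theorem convL_eq_convWith (f : H →ₗ[k] B) (μ : H →ₗ[k] M) : convL S f μ = convWith S.lact f μ :=
  rfl

theorem convR_eq_convWith (μ : H →ₗ[k] M) (f : H →ₗ[k] B) : convR S μ f = convWith S.ract μ f :=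
  rfl

theorem convL_neg (f : H →ₗ[k] B) (μ : H →ₗ[k] M) : convL S f (-μ) = -convL S f μ :=
  map_neg (convWith S.lact f) μ

theorem convR_neg (μ : H →ₗ[k] M) (f : H →ₗ[k] B) : convR S (-μ) f = -convR S μ f :=
  LinearMap.map_neg₂ (convWith S.ract) μ f

theorem convR_add (μ μ' : H →ₗ[k] M) (f : H →ₗ[k] B) :
    convR S (μ + μ') f = convR S μ f + convR S μ' f :=
  LinearMap.map_add₂ (convWith S.ract) μ μ' f

theorem convR_convR (μ : H →ₗ[k] M) (f g : H →ₗ[k] B) :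
    convR S (convR S μ f) g = convR S μ (conv f g) :=
  convWith_assoc _ _ _ _ (fun m b b' => (S.ract_mul m b b').symm) μ f g

theorem convR_convL (f : H →ₗ[k] B) (μ : H →ₗ[k] M) (g : H →ₗ[k] B) :
    convR S (convL S f μ) g = convL S f (convR S μ g) :=
  convWith_assoc _ _ _ _ S.middle f μ g

theorem convL_conv (f g : H →ₗ[k] B) (μ : H →ₗ[k] M) :
    convL S (conv f g) μ = convL S f (convL S g μ) :=
  convWith_assoc _ _ _ _ S.lact_mul f g μ

theorem convL_convOne (μ : H →ₗ[k] M) : convL S convOne μ = μ := by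
  rw [convL_eq_convWith, convOne, convWith_comp_counit_left]
  ext
  simp [S.lact_one]

theorem EquivStarBimodule.star_ract (S : EquivStarBimodule k H B M ρ) (m : M) (b : B) :
    star (S.ract m b) = S.lact (star b) (star m) := by
  simpa [S.lact_one, S.ract_one] using S.star_compat 1 m b

theorem IsHopfStar.convStar_act (hH : IsHopfStar k H) (b : B) :
    convStar (ρ.act b) = ρ.act (star b) := by
  ext h
  rw [convStar_apply, ρ.act_star, hH.star_antipode_star_antipode]

theorem IsHopfStar.convStar_conv (hH : IsHopfStar k H) (f g : H →ₗ[k] B) :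
    convStar (conv f g) = conv (convStar g) (convStar f) :=
  hH.convStar_convWith _ _ star_mul f g

theorem IsHopfStar.convStar_convR (hH : IsHopfStar k H) (μ : H →ₗ[k] M) (f : H →ₗ[k] B) :
    convStar (convR S μ f) = convL S (convStar f) (convStar μ) :=
  hH.convStar_convWith _ _ S.star_ract μ f

theorem mcCocycle_eq (der : B →ₗ[k] M) (σ : H →ₗ[k] B) :
    mcCocycle S der σ = -convR S (der ∘ₗ σ) (convStar σ) := rfl

namespace IsEquivStarDerivation

variable {der : B →ₗ[k] M} (hder : IsEquivStarDerivation S der)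
include hder

theorem map_one : der 1 = 0 := by
  simpa [S.ract_one, S.lact_one] using hder.1 1 1

theorem comp_conv (f g : H →ₗ[k] B) :
    der ∘ₗ conv f g = convR S (der ∘ₗ f) g + convL S f (der ∘ₗ g) := by
  ext h
  simp only [LinearMap.comp_apply, LinearMap.add_apply, conv_eq_convWith, convL_eq_convWith,
    convR_eq_convWith, convWith_apply _ _ _ (ℛ k h), map_sum, ← Finset.sum_add_distrib]
  exact Finset.sum_congr rfl fun i _ => hder.1 _ _

theorem comp_convOne : der ∘ₗ (convOne : H →ₗ[k] B) = 0 := by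
  ext h
  simp [convOne, Algebra.algebraMap_eq_smul_one, hder.map_one]

theorem comp_act (b : B) : der ∘ₗ ρ.act b = S.hact (der b) :=
  LinearMap.ext (hder.2.2 b)

theorem convStar_comp (f : H →ₗ[k] B) : convStar (der ∘ₗ f) = -(der ∘ₗ convStar f) := by
  ext h
  simp [convStar_apply, hder.2.1]

end IsEquivStarDerivation

namespace IsLazySweedlerCocycle

variable {σ : H →ₗ[k] B} (hσ : IsLazySweedlerCocycle S σ)
include hσ

theorem conv_convStar : conv σ (convStar σ) = convOne := hσ.1

theorem convStar_conv : conv (convStar σ) σ = convOne := hσ.2.1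

theorem comm_act (b : B) : conv σ (ρ.act b) = conv (ρ.act b) σ := hσ.2.2.1 b

theorem comm_hact (m : M) : convL S σ (S.hact m) = convR S (S.hact m) σ := hσ.2.2.2.1 m

theorem map_one : σ 1 = 1 := hσ.2.2.2.2.1

theorem comp_mulLeft (h : H) : σ ∘ₗ LinearMap.mulLeft k h = conv (ρ.act (σ h)) σ :=
  hσ.2.2.2.2.2 h

theorem convStar_comm_act (b : B) :
    conv (convStar σ) (ρ.act b) = conv (ρ.act b) (convStar σ) :=
  conv_comm_of_inverse hσ.conv_convStar hσ.convStar_conv (hσ.comm_act b)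

theorem convStar_comp_mulLeft (hH : IsHopfStar k H) (h : H) :
    convStar σ ∘ₗ LinearMap.mulLeft k h = conv (convStar σ) (ρ.act (convStar σ h)) := by
  rw [_root_.convStar_comp_mulLeft, hσ.comp_mulLeft, hH.convStar_conv, hH.convStar_act]
  rfl

variable {der : B →ₗ[k] M} (hder : IsEquivStarDerivation S der)
include hder

theorem der_comm_act (b : B) :
    convR S (der ∘ₗ σ) (ρ.act b) = convL S (ρ.act b) (der ∘ₗ σ) := by
  have h₁ := hder.comp_conv σ (ρ.act b)
  have h₂ := hder.comp_conv (ρ.act b) σ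
  rw [hσ.comm_act, h₂, hder.comp_act, hσ.comm_hact, add_comm] at h₁
  exact (add_right_cancel h₁).symm

theorem convR_der_convStar_comm_act (b : B) :
    convR S (convR S (der ∘ₗ σ) (convStar σ)) (ρ.act b) =
      convL S (ρ.act b) (convR S (der ∘ₗ σ) (convStar σ)) := by
  rw [convR_convR, hσ.convStar_comm_act, ← convR_convR, hσ.der_comm_act hder, convR_convL]

theorem convR_comp_mulLeft_comp_mulLeft (hH : IsHopfStar k H) (a b : H) :
    convR S ((der ∘ₗ σ) ∘ₗ LinearMap.mulLeft k a) (convStar σ ∘ₗ LinearMap.mulLeft k b) =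
      S.hact (S.ract (der (σ a)) (convStar σ b)) +
        convL S (ρ.act (σ a * convStar σ b)) (convR S (der ∘ₗ σ) (convStar σ)) := by
  -- `σ(a ·) = (σ(a) ◁ ·) ⋆ σ` and `σ*(b ·) = σ* ⋆ (σ*(b) ◁ ·)`; the `σ ⋆ σ*` in the middle cancels.
  rw [LinearMap.comp_assoc, hσ.comp_mulLeft, hder.comp_conv, hder.comp_act,
    hσ.convStar_comp_mulLeft hH, convR_add, convR_convR, ← conv_assoc, hσ.conv_convStar,
    convOne_conv, convR_convL, ← convR_convR, hσ.convR_der_convStar_comm_act hder,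
    ← convL_conv, S.hact_ract, ρ.act_algebra_mul]
  rfl

theorem convR_der_convStar_comp_mulLeft (hH : IsHopfStar k H) (h : H) :
    convR S (der ∘ₗ σ) (convStar σ) ∘ₗ LinearMap.mulLeft k h =
      S.hact (convR S (der ∘ₗ σ) (convStar σ) h) +
        counit (R := k) h • convR S (der ∘ₗ σ) (convStar σ) := by
  let r := ℛ k h
  rw [convR_eq_convWith, convWith_comp_mulLeft _ _ _ r]
  simp only [← convR_eq_convWith, hσ.convR_comp_mulLeft_comp_mulLeft hder hH,
    Finset.sum_add_distrib]
  have hact_sum :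
      ∑ i ∈ r.index, S.hact (S.ract (der (σ (r.left i))) (convStar σ (r.right i))) =
        S.hact (convR S (der ∘ₗ σ) (convStar σ) h) := by
    rw [← map_sum, convR_eq_convWith, convWith_apply _ _ _ r]
    rfl
  have counit_sum : ∑ i ∈ r.index, σ (r.left i) * convStar σ (r.right i) =
      counit (R := k) h • 1 := by
    rw [← Algebra.algebraMap_eq_smul_one, ← conv_apply, hσ.conv_convStar]
    rfl
  rw [hact_sum]
  congr 1
  simp only [convL_eq_convWith]
  rw [← LinearMap.sum_apply, ← map_sum, ← map_sum, counit_sum, map_smul, ρ.act_algebra_one,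
    map_smul, LinearMap.smul_apply, ← convL_eq_convWith, ← convOne, convL_convOne]

theorem mcCocycle_eq_convL : mcCocycle S der σ = convL S σ (der ∘ₗ convStar σ) := by
  have h := hder.comp_conv σ (convStar σ)
  rw [hσ.conv_convStar, hder.comp_convOne] at h
  exact neg_eq_of_add_eq_zero_right h.symm

theorem convStar_mcCocycle (hH : IsHopfStar k H) :
    convStar (mcCocycle S der σ) = mcCocycle S der σ := by
  rw [mcCocycle_eq, convStar_neg, hH.convStar_convR, hH.convStar_convStar, hder.convStar_comp,
    convL_neg, neg_neg]
  exact (hσ.mcCocycle_eq_convL hder).symm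

theorem mcCocycle_comm_act (b : B) :
    convL S (ρ.act b) (mcCocycle S der σ) = convR S (mcCocycle S der σ) (ρ.act b) := by
  rw [mcCocycle_eq, convL_neg, convR_neg, hσ.convR_der_convStar_comm_act hder]

theorem mcCocycle_map_one : mcCocycle S der σ 1 = 0 := by
  simp [mcCocycle_eq, convR, Algebra.TensorProduct.one_def, hσ.map_one, hder.map_one]

theorem mcCocycle_comp_mulLeft (hH : IsHopfStar k H) (h : H) :
    mcCocycle S der σ ∘ₗ LinearMap.mulLeft k h =
      S.hact (mcCocycle S der σ h) + counit (R := k) h • mcCocycle S der σ := by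
  rw [mcCocycle_eq, LinearMap.neg_comp, hσ.convR_der_convStar_comp_mulLeft hder hH,
    LinearMap.neg_apply, map_neg, smul_neg, neg_add]

theorem isLazyHochschildCocycle_mcCocycle (hH : IsHopfStar k H) :
    IsLazyHochschildCocycle S (mcCocycle S der σ) :=
  ⟨hσ.convStar_mcCocycle hder hH, hσ.mcCocycle_comm_act hder, hσ.mcCocycle_map_one hder,
    hσ.mcCocycle_comp_mulLeft hder hH⟩

end IsLazySweedlerCocycle

theorem mcCocycle_conv {der : B →ₗ[k] M} (hder : IsEquivStarDerivation S der)
    (hH : IsHopfStar k H) (σ : H →ₗ[k] B) {τ : H →ₗ[k] B} (hτ : IsLazySweedlerCocycle S τ) :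
    mcCocycle S der (conv σ τ) =
      mcCocycle S der σ + convL S σ (convR S (mcCocycle S der τ) (convStar σ)) := by
  rw [mcCocycle_eq, hder.comp_conv, hH.convStar_conv, convR_add, convR_convR, ← conv_assoc,
    hτ.conv_convStar, convOne_conv, convR_convL, ← convR_convR, mcCocycle_eq, mcCocycle_eq,
    convR_neg, convL_neg, neg_add]

end Bimodule

/-- Let `H` be a Hopf `*`-algebra, `B` a right `H`-module `*`-algebra,
`M` a right `H`-equivariant `B`-`*`-bimodule, and `der : B → M` an `H`-equivariant
`*`-derivation.  The Maurer–Cartan map `MC[der](σ)(h) := -der σ(h₍₁₎) • σ*(h₍₂₎)` sends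
lazy Sweedler 1-cocycles to lazy Hochschild 1-cocycles, and is a group 1-cocycle for the
conjugation action: `MC[der](σ ⋆ τ) = MC[der](σ) + σ ⊳ MC[der](τ)`, where
`σ ⊳ μ := σ ⋆ μ ⋆ σ⁻¹`. -/
theorem stmt11 {H B M : Type*}
    [Ring H] [HopfAlgebra ℂ H] [StarRing H] [StarModule ℂ H]
    [Ring B] [Algebra ℂ B] [StarRing B] [StarModule ℂ B]
    [AddCommGroup M] [Module ℂ M] [StarAddMonoid M] [StarModule ℂ M]
    (hH : IsHopfStar ℂ H)
    (ρ : RightHopfModuleStarAlgebra ℂ H B)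
    (S : EquivStarBimodule ℂ H B M ρ)
    (der : B →ₗ[ℂ] M) (hder : IsEquivStarDerivation S der) :
    (∀ σ : H →ₗ[ℂ] B, IsLazySweedlerCocycle S σ →
      IsLazyHochschildCocycle S (mcCocycle S der σ)) ∧
    (∀ σ τ σinv : H →ₗ[ℂ] B, IsLazySweedlerCocycle S σ → IsLazySweedlerCocycle S τ →
      conv σ σinv = convOne → conv σinv σ = convOne →
      mcCocycle S der (conv σ τ)
        = mcCocycle S der σ + convL S σ (convR S (mcCocycle S der τ) σinv)) := by
  refine ⟨fun σ hσ => hσ.isLazyHochschildCocycle_mcCocycle hder hH,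
    fun σ τ σinv hσ hτ hσinv _ => ?_⟩
  rw [← conv_inverse_unique hσ.convStar_conv hσinv]
  exact mcCocycle_conv hder hH σ hτ
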